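/- arXiv:1305.1257 — 6 statements merged into one kernel-verified Lean document; each statement's English description precedes it below -/
import Mathlib

section
/- Let γ be a self-avoiding walk of length n in ℤ^d with hanging time h (index of the lexicographically maximal point). Define Unf(γ) as the concatenation of γ[0,h], one step in direction e₁, and the reflection of γ[h,n] through the hyperplane ⟨x−γ_h, e₁⟩ = 0 translated by e₁. Then Unf(γ) is a self-avoiding walk of length n+1. -/
def IsSAW (d n : ℕ) (γ : ℕ → Fin d → ℤ) : Prop :=
  γ 0 = 0 ∧
  (∀ i, i < n → ∑ j, |γ (i + 1) j - γ i j| = 1) ∧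
  (∀ i, i ≤ n → ∀ k, k ≤ n → γ i = γ k → i = k)

lemma first_coord_le {d : ℕ} [NeZero d] {x y : Fin d → ℤ}
    (h : toLex x < toLex y) : x 0 ≤ y 0 := by
  obtain ⟨i, hi, hlt⟩ := h
  rcases eq_or_ne i 0 with rfl | hne
  · exact le_of_lt hlt
  · exact le_of_eq (hi 0 (lt_of_le_of_ne (Fin.zero_le i) (Ne.symm hne)))

/-- Unfolding at the hanging time: Unf(γ) — the concatenation of γ[0,h], one step in
direction e₁, and the e₁-reflection of γ[h,n] translated by e₁ — is a self-avoiding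
walk of length n+1. -/
theorem stmt_5 (d n : ℕ) [NeZero d] (γ b : ℕ → Fin d → ℤ)
    (hγ : IsSAW d n γ) (h : ℕ) (hh : h ≤ n)
    (hmax : ∀ k, k ≤ n → k ≠ h → toLex (γ k) < toLex (γ h))
    (hb₁ : ∀ i, i ≤ h → b i = γ i)
    (hb₂ : ∀ i, h < i → ∀ j : Fin d,
      b i j = if j = (0 : Fin d) then 2 * γ h 0 - γ (i - 1) 0 + 1 else γ (i - 1) j) :
    IsSAW d (n + 1) b := by
  obtain ⟨hz, hstep, hinj⟩ := hγ
  have hle : ∀ k, k ≤ n → γ k 0 ≤ γ h 0 := by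
    intro k hk
    rcases eq_or_ne k h with rfl | hne
    · exact le_refl _
    · exact first_coord_le (hmax k hk hne)
  -- first coordinate dichotomy for b
  have hlow : ∀ i, i ≤ h → b i 0 ≤ γ h 0 := by
    intro i hi
    rw [hb₁ i hi]
    exact hle i (hi.trans hh)
  have hhigh : ∀ i, h < i → i ≤ n + 1 → γ h 0 < b i 0 := by
    intro i hi hin
    rw [hb₂ i hi 0, if_pos rfl]
    have : γ (i - 1) 0 ≤ γ h 0 := by
      apply hle
      omega
    omega
  refine ⟨?_, ?_, ?_⟩
  · rw [hb₁ 0 (Nat.zero_le _), hz]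
  · intro i hi
    rcases lt_trichotomy i h with hih | rfl | hih
    · rw [hb₁ (i + 1) hih, hb₁ i hih.le]
      exact hstep i (lt_of_lt_of_le hih hh)
    · have h1 : b (i + 1) = fun j => if j = (0 : Fin d) then γ i 0 + 1 else γ i j := by
        funext j
        rw [hb₂ (i + 1) (Nat.lt_succ_self i) j]
        simp only [Nat.add_sub_cancel]
        split <;> ring_nf
      rw [h1, hb₁ i le_rfl]
      have : ∀ j : Fin d, |(if j = (0 : Fin d) then γ i 0 + 1 else γ i j) - γ i j|
          = if j = (0 : Fin d) then 1 else 0 := by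
        intro j
        split
        · next hj => subst hj; simp
        · simp
      simp only [this]
      rw [Finset.sum_ite_eq' Finset.univ (0 : Fin d) (fun _ => (1 : ℤ))]
      simp
    · have hi1 : 1 ≤ i := by omega
      have key : ∀ j : Fin d, |b (i + 1) j - b i j| = |γ i j - γ (i - 1) j| := by
        intro j
        rw [hb₂ (i + 1) (by omega) j, hb₂ i hih j]
        simp only [Nat.add_sub_cancel]
        split
        · rw [show (2 * γ h 0 - γ i 0 + 1) - (2 * γ h 0 - γ (i - 1) 0 + 1)
            = -(γ i 0 - γ (i - 1) 0) by ring, abs_neg]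
          next hj => rw [hj]
        · rfl
      simp only [key]
      have := hstep (i - 1) (by omega)
      rwa [Nat.sub_add_cancel hi1] at this
  · intro i hi k hk hik
    rcases le_or_gt i h with hih | hih <;> rcases le_or_gt k h with hkh | hkh
    · exact hinj i (hih.trans hh) k (hkh.trans hh) (by rw [← hb₁ i hih, ← hb₁ k hkh, hik])
    · exact absurd (congrFun hik 0) (by have := hlow i hih; have := hhigh k hkh hk; omega)
    · exact absurd (congrFun hik 0) (by have := hlow k hkh; have := hhigh i hih hi; omega)
    · have hg : γ (i - 1) = γ (k - 1) := by
        funext j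
        have h0 := congrFun hik j
        rw [hb₂ i hih j, hb₂ k hkh j] at h0
        split at h0
        · next hj => rw [hj]; omega
        · exact h0
      have := hinj (i - 1) (by omega) (k - 1) (by omega) hg
      omega
end

section
/- Let (Ω, P) be a finite probability space, T ≥ k ≥ 1 integers, A_1 ⊇ A_2 ⊇ ⋯ ⊇ A_T events, and C_1,…,C_T events such that (i) every ω ∈ Ω belongs to at most M of the events C_i, and (ii) P(C_i | A_i) ≥ δ for each i (with P(A_i) > 0). If k·δ ≥ 2M then P(A_k) ≤ 1/2. More generally, P(A_{jk}) ≤ 2^{-j} for every j with jk ≤ T. -/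
/-- Abstract core of Lemma l.avoidance: decreasing events A_i, events C_i with
multiplicity at most M, conditional probabilities P(C_i|A_i) ≥ δ. Then
P(A_k) ≤ M/(kδ); and if kδ ≥ 2M then P(A_{jk}) ≤ 2^{-j}. -/
theorem stmt_7 {Ω : Type*} [Fintype Ω] [DecidableEq Ω]
    (w : Ω → ℝ) (hw : ∀ ω, 0 ≤ w ω) (hwsum : ∑ ω, w ω = 1)
    (T k M : ℕ) (hk : 1 ≤ k) (hkT : k ≤ T)
    (A C : ℕ → Finset Ω)
    (hdec : ∀ i j, 1 ≤ i → i ≤ j → j ≤ T → A j ⊆ A i)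
    (δ : ℝ) (hδ : 0 < δ)
    (hmult : ∀ ω : Ω, ((Finset.Icc 1 T).filter (fun i => ω ∈ C i)).card ≤ M)
    (hApos : ∀ i, 1 ≤ i → i ≤ T → 0 < ∑ ω ∈ A i, w ω)
    (hcond : ∀ i, 1 ≤ i → i ≤ T → δ * ∑ ω ∈ A i, w ω ≤ ∑ ω ∈ C i ∩ A i, w ω) :
    (∑ ω ∈ A k, w ω) ≤ (M : ℝ) / ((k : ℝ) * δ) ∧
    (2 * (M : ℝ) ≤ (k : ℝ) * δ →
      ∀ j : ℕ, 1 ≤ j → j * k ≤ T → ∑ ω ∈ A (j * k), w ω ≤ (1/2 : ℝ) ^ j) := by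
  have hkpos : (0:ℝ) < (k:ℝ) := by exact_mod_cast hk
  have hkδ : (0:ℝ) < (k:ℝ) * δ := by positivity
  -- key block inequality
  have key : ∀ (a : ℕ) (S : Finset Ω), a + k ≤ T →
      (∀ i, a < i → i ≤ a + k → A i ⊆ S) →
      (k:ℝ) * δ * ∑ ω ∈ A (a + k), w ω ≤ (M:ℝ) * ∑ ω ∈ S, w ω := by
    intro a S haT hAS
    have lower : (k:ℝ) * δ * ∑ ω ∈ A (a + k), w ω ≤
        ∑ i ∈ Finset.Ioc a (a + k), ∑ ω ∈ C i ∩ A i, w ω := by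
      have h1 : (k:ℝ) * δ * ∑ ω ∈ A (a + k), w ω =
          ∑ _i ∈ Finset.Ioc a (a + k), δ * ∑ ω ∈ A (a + k), w ω := by
        rw [Finset.sum_const, Nat.card_Ioc, Nat.add_sub_cancel_left, nsmul_eq_mul]
        ring
      rw [h1]
      apply Finset.sum_le_sum
      intro i hi
      rw [Finset.mem_Ioc] at hi
      have hi1 : 1 ≤ i := by omega
      have hiT : i ≤ T := le_trans hi.2 haT
      calc δ * ∑ ω ∈ A (a + k), w ω
          ≤ δ * ∑ ω ∈ A i, w ω := by
            apply mul_le_mul_of_nonneg_left _ hδ.le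
            exact Finset.sum_le_sum_of_subset_of_nonneg
              (hdec i (a + k) hi1 hi.2 haT) (fun ω _ _ => hw ω)
        _ ≤ ∑ ω ∈ C i ∩ A i, w ω := hcond i hi1 hiT
    have upper : ∑ i ∈ Finset.Ioc a (a + k), ∑ ω ∈ C i ∩ A i, w ω ≤
        (M:ℝ) * ∑ ω ∈ S, w ω := by
      have step1 : ∀ i ∈ Finset.Ioc a (a + k),
          ∑ ω ∈ C i ∩ A i, w ω ≤ ∑ ω ∈ S, if ω ∈ C i then w ω else 0 := by
        intro i hi
        rw [Finset.mem_Ioc] at hi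
        rw [← Finset.sum_filter]
        apply Finset.sum_le_sum_of_subset_of_nonneg _ (fun ω _ _ => hw ω)
        intro ω hω
        rw [Finset.mem_inter] at hω
        rw [Finset.mem_filter]
        exact ⟨hAS i hi.1 hi.2 hω.2, hω.1⟩
      have hIoc : Finset.Ioc a (a + k) ⊆ Finset.Icc 1 T := by
        intro i hi
        rw [Finset.mem_Ioc] at hi
        rw [Finset.mem_Icc]
        omega
      calc ∑ i ∈ Finset.Ioc a (a + k), ∑ ω ∈ C i ∩ A i, w ω
          ≤ ∑ i ∈ Finset.Ioc a (a + k), ∑ ω ∈ S, if ω ∈ C i then w ω else 0 :=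
            Finset.sum_le_sum step1
        _ = ∑ ω ∈ S, ∑ i ∈ Finset.Ioc a (a + k), if ω ∈ C i then w ω else 0 :=
            Finset.sum_comm
        _ ≤ ∑ ω ∈ S, (M:ℝ) * w ω := by
            apply Finset.sum_le_sum
            intro ω _
            have hcard : (((Finset.Ioc a (a + k)).filter (fun i => ω ∈ C i)).card : ℝ)
                ≤ (M : ℝ) := by
              exact_mod_cast le_trans
                (Finset.card_le_card (Finset.filter_subset_filter _ hIoc)) (hmult ω)
            calc ∑ i ∈ Finset.Ioc a (a + k), (if ω ∈ C i then w ω else 0)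
                = ∑ _i ∈ (Finset.Ioc a (a + k)).filter (fun i => ω ∈ C i), w ω := by
                  rw [Finset.sum_filter]
              _ = (((Finset.Ioc a (a + k)).filter (fun i => ω ∈ C i)).card : ℝ) * w ω := by
                  rw [Finset.sum_const, nsmul_eq_mul]
              _ ≤ (M:ℝ) * w ω := mul_le_mul_of_nonneg_right hcard (hw ω)
        _ = (M:ℝ) * ∑ ω ∈ S, w ω := by rw [Finset.mul_sum]
    exact le_trans lower upper
  -- Part 1
  have part1 : (∑ ω ∈ A k, w ω) ≤ (M : ℝ) / ((k : ℝ) * δ) := by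
    have h := key 0 Finset.univ (by simpa using hkT) (fun i _ _ => Finset.subset_univ _)
    simp only [Nat.zero_add, hwsum, mul_one] at h
    rw [le_div_iff₀ hkδ]
    linarith
  refine ⟨part1, ?_⟩
  intro h2M j
  induction j with
  | zero => intro h; omega
  | succ j ih =>
    intro _ hjT
    have hsucc : (j + 1) * k = j * k + k := Nat.succ_mul j k
    rw [hsucc] at hjT ⊢
    rcases Nat.eq_zero_or_pos j with rfl | hjpos
    · simp only [Nat.zero_mul, Nat.zero_add, pow_one, zero_add, pow_succ, pow_zero, one_mul]
      calc ∑ ω ∈ A k, w ω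
          ≤ (M:ℝ) / ((k:ℝ) * δ) := part1
        _ ≤ 1/2 := by rw [div_le_iff₀ hkδ]; linarith
    · have hjkT : j * k ≤ T := Nat.le_trans (Nat.le_add_right _ _) hjT
      have ihj := ih hjpos hjkT
      have hjk1 : 1 ≤ j * k :=
        Nat.one_le_iff_ne_zero.mpr (Nat.mul_ne_zero (by omega) (by omega))
      have hsub : ∀ i, j * k < i → i ≤ j * k + k → A i ⊆ A (j * k) := by
        intro i hi1 hi2
        exact hdec (j * k) i hjk1 hi1.le (le_trans hi2 hjT)
      have h := key (j * k) (A (j * k)) hjT hsub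
      have hAnn : (0:ℝ) ≤ ∑ ω ∈ A (j * k), w ω :=
        Finset.sum_nonneg (fun ω _ => hw ω)
      have hM0 : (0:ℝ) ≤ M := Nat.cast_nonneg M
      have hpow : (0:ℝ) ≤ (1/2:ℝ)^j := by positivity
      have hfin : (k:ℝ) * δ * ∑ ω ∈ A (j * k + k), w ω ≤
          (k:ℝ) * δ * ((1/2:ℝ)^(j+1)) := by
        calc (k:ℝ) * δ * ∑ ω ∈ A (j * k + k), w ω
            ≤ (M:ℝ) * ∑ ω ∈ A (j * k), w ω := h
          _ ≤ (M:ℝ) * (1/2:ℝ)^j := mul_le_mul_of_nonneg_left ihj hM0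
          _ ≤ ((k:ℝ) * δ / 2) * (1/2:ℝ)^j := mul_le_mul_of_nonneg_right (by linarith) hpow
          _ = (k:ℝ) * δ * ((1/2:ℝ)^(j+1)) := by rw [pow_succ]; ring
      exact le_of_mul_le_mul_left hfin hkδ
end

section
/- Let δ ∈ (0,1/2) and m ∈ ℕ, and let X be hypergeometric: P(X = k) = C(s,k)C(m−s, t−k)/C(m,t), with s = |S_1| ≥ δm, m − s ≥ δm, t ≥ δm, m − t ≥ δm. Then for every k, P(X = k) ≤ C·m^{−1/2} for a constant C depending only on δ. -/
lemma vdm10 (m s t : ℕ) (h : s ≤ m) :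
    m.choose t = ∑ j ∈ Finset.range (t+1), s.choose j * (m-s).choose (t-j) := by
  conv_lhs => rw [← Nat.add_sub_cancel' h]
  rw [Nat.add_choose_eq, Finset.Nat.sum_antidiagonal_eq_sum_range_succ_mk]

lemma rec10 (m s t j : ℕ) (hj : j < t) :
    s.choose (j+1) * (m-s).choose (t-(j+1)) * ((j+1) * ((m-s) - (t-(j+1))))
      = s.choose j * (m-s).choose (t-j) * ((s-j) * (t-j)) := by
  have h1 := Nat.choose_succ_right_eq s j
  have h2 := Nat.choose_succ_right_eq (m-s) (t-(j+1))
  have ht : t - (j+1) + 1 = t - j := by omega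
  rw [ht] at h2
  calc s.choose (j+1) * (m-s).choose (t-(j+1)) * ((j+1) * ((m-s) - (t-(j+1))))
      = (s.choose (j+1) * (j+1)) * ((m-s).choose (t-(j+1)) * ((m-s) - (t-(j+1)))) := by ring
    _ = (s.choose j * (s-j)) * ((m-s).choose (t-j) * (t-j)) := by rw [h1, ← h2]
    _ = s.choose j * (m-s).choose (t-j) * ((s-j) * (t-j)) := by ring

set_option maxHeartbeats 1000000 in
/-- The maximal point probability of a hypergeometric distribution with all four
parameters at least δm is at most C(δ)·m^{-1/2}. -/
theorem stmt_10 (δ : ℝ) (hδ0 : 0 < δ) (hδ1 : δ < 1/2) :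
    ∃ C : ℝ, 0 < C ∧ ∀ m s t : ℕ, 1 ≤ m → s ≤ m → t ≤ m →
      δ * m ≤ (s : ℝ) → δ * m ≤ ((m - s : ℕ) : ℝ) →
      δ * m ≤ (t : ℝ) → δ * m ≤ ((m - t : ℕ) : ℝ) →
      ∀ k : ℕ, k ≤ t →
        ((s.choose k * (m - s).choose (t - k) : ℕ) : ℝ) / ((m.choose t : ℕ) : ℝ)
          ≤ C / Real.sqrt m := by
  set ε : ℝ := δ^2/8 with hεdef
  have hε0 : 0 < ε := by positivity
  have hεδ : ε ≤ δ/16 := by rw [hεdef]; nlinarith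
  have hε1 : ε < 1 := by nlinarith
  refine ⟨16/ε, by positivity, ?_⟩
  intro m s t hm hsm htm hs hms ht hmt k hkt
  have hM1 : (1:ℝ) ≤ (m:ℝ) := by exact_mod_cast hm
  have hM0 : (0:ℝ) < (m:ℝ) := by linarith
  have hsmR : ((m-s:ℕ):ℝ) = (m:ℝ) - s := by rw [Nat.cast_sub hsm]
  have htmR : ((m-t:ℕ):ℝ) = (m:ℝ) - t := by rw [Nat.cast_sub htm]
  rw [hsmR] at hms
  rw [htmR] at hmt
  have hsR : (s:ℝ) ≤ m := by exact_mod_cast hsm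
  have htR : (t:ℝ) ≤ m := by exact_mod_cast htm
  have hX0 : (0:ℝ) < (m.choose t : ℝ) := by exact_mod_cast Nat.choose_pos htm
  have hsqM : (0:ℝ) < Real.sqrt m := Real.sqrt_pos.mpr hM0
  have hsqsq : Real.sqrt m * Real.sqrt m = (m:ℝ) := Real.mul_self_sqrt hM0.le
  have hsqlem : Real.sqrt m ≤ (m:ℝ) := by
    nlinarith only [sq_nonneg (Real.sqrt m - 1), hsqsq, hM1]
  have hsum := vdm10 m s t hsm
  have hterm_le : ∀ j, j ≤ t → s.choose j * (m-s).choose (t-j) ≤ m.choose t := by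
    intro j hj
    rw [hsum]
    exact Finset.single_le_sum (f := fun i => s.choose i * (m-s).choose (t-i))
      (fun i _ => Nat.zero_le _) (Finset.mem_range.mpr (by omega))
  by_cases hsmall : (m:ℝ) < 144/ε^2
  · have h1 : ((s.choose k * (m-s).choose (t-k) : ℕ):ℝ) / (m.choose t:ℝ) ≤ 1 := by
      rw [div_le_one hX0]
      exact_mod_cast hterm_le k hkt
    have h2 : Real.sqrt m ≤ 16/ε := by
      have he : ((16:ℝ)/ε)^2 = 256/ε^2 := by rw [div_pow]; norm_num
      have h144 : (144:ℝ)/ε^2 ≤ 256/ε^2 := by gcongr <;> norm_num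
      have hle : (m:ℝ) ≤ (16/ε)^2 := by rw [he]; linarith
      have := Real.sqrt_le_sqrt hle
      rwa [Real.sqrt_sq (by positivity)] at this
    refine h1.trans ?_
    rw [le_div_iff₀ hsqM, one_mul]
    exact h2
  · push_neg at hsmall
    have hsq12 : 12/ε ≤ Real.sqrt m := by
      have he : ((12:ℝ)/ε)^2 = 144/ε^2 := by rw [div_pow]; norm_num
      have : Real.sqrt (((12:ℝ)/ε)^2) ≤ Real.sqrt m := by
        apply Real.sqrt_le_sqrt; rw [he]; linarith
      rwa [Real.sqrt_sq (by positivity)] at this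
    have hεsq : 12 ≤ ε * Real.sqrt m := by
      rw [div_le_iff₀ hε0] at hsq12
      linarith [mul_comm (Real.sqrt m) ε]
    have hεm' : ε * Real.sqrt m ≤ ε * m := mul_le_mul_of_nonneg_left hsqlem hε0.le
    have hεm : 12 ≤ ε * m := by linarith
    have hεδm : ε * m ≤ δ/16 * m := mul_le_mul_of_nonneg_right hεδ hM0.le
    obtain ⟨K, hKmem, hKmax⟩ := Finset.exists_max_image (Finset.range (t+1))
      (fun j => s.choose j * (m-s).choose (t-j)) ⟨0, Finset.mem_range.mpr (Nat.succ_pos t)⟩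
    have hKt : K ≤ t := by have := Finset.mem_range.mp hKmem; omega
    have hKmax' : ∀ j, j ≤ t → s.choose j * (m-s).choose (t-j)
        ≤ s.choose K * (m-s).choose (t-K) :=
      fun j hj => hKmax j (Finset.mem_range.mpr (by omega))
    by_cases hA0 : s.choose K * (m-s).choose (t-K) = 0
    · have hz : s.choose k * (m-s).choose (t-k) = 0 := by
        have := hKmax' k hkt; omega
      rw [hz]
      simp only [Nat.cast_zero, zero_div]
      positivity
    · have hA1 : 1 ≤ s.choose K * (m-s).choose (t-K) := Nat.one_le_iff_ne_zero.mpr hA0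
      have hKs : K ≤ s := by
        by_contra h
        push_neg at h
        rw [Nat.choose_eq_zero_of_lt h, zero_mul] at hA0
        exact hA0 rfl
      have htK : t - K ≤ m - s := by
        by_contra h
        push_neg at h
        rw [Nat.choose_eq_zero_of_lt h, mul_zero] at hA0
        exact hA0 rfl
      have hmode : K * ((m-s) - (t-K)) ≤ (s - K + 1) * (t - K + 1) := by
        rcases Nat.eq_zero_or_pos K with h0 | hpos
        · simp [h0]
        · have hid := rec10 m s t (K-1) (by omega)
          have hK1 : K - 1 + 1 = K := by omega
          rw [hK1] at hid
          have hle := hKmax' (K-1) (by omega)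
          have h2 : s - (K-1) = s - K + 1 := by omega
          have h3 : t - (K-1) = t - K + 1 := by omega
          rw [h2, h3] at hid
          rw [h3] at hle
          have hfin : s.choose K * (m-s).choose (t-K) * (K * ((m-s) - (t-K)))
              ≤ s.choose K * (m-s).choose (t-K) * ((s-K+1) * (t-K+1)) := by
            rw [hid]
            exact Nat.mul_le_mul_right _ hle
          exact Nat.le_of_mul_le_mul_left hfin hA1
      set P : ℝ := (s:ℝ) - K + 1 with hPdef
      set Q : ℝ := (t:ℝ) - K + 1 with hQdef
      set S : ℝ := ((m:ℝ) - s) - ((t:ℝ) - K) with hSdef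
      have hKR : (K:ℝ) ≤ s := by exact_mod_cast hKs
      have hKtR : (K:ℝ) ≤ t := by exact_mod_cast hKt
      have hK0 : (0:ℝ) ≤ K := Nat.cast_nonneg K
      have hS0 : (0:ℝ) ≤ S := by
        have hc : ((t-K:ℕ):ℝ) ≤ ((m-s:ℕ):ℝ) := by exact_mod_cast htK
        rw [Nat.cast_sub hKt, hsmR] at hc
        rw [hSdef]; linarith
      have hs0 : (0:ℝ) ≤ s := Nat.cast_nonneg s
      have ht0 : (0:ℝ) ≤ t := Nat.cast_nonneg t
      have hSm : S ≤ (m:ℝ) := by rw [hSdef]; linarith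
      have hPm : P ≤ (m:ℝ) + 1 := by rw [hPdef]; linarith
      have hQm : Q ≤ (m:ℝ) + 1 := by rw [hQdef]; linarith
      have hP1 : (1:ℝ) ≤ P := by rw [hPdef]; linarith
      have hQ1 : (1:ℝ) ≤ Q := by rw [hQdef]; linarith
      have hKm : (K:ℝ) ≤ m := by linarith
      have hmodeR : (K:ℝ) * S ≤ P * Q := by
        have e1 : ((K * ((m-s) - (t-K)) : ℕ) : ℝ) = (K:ℝ) * S := by
          rw [Nat.cast_mul, Nat.cast_sub htK, Nat.cast_sub hKt, hsmR, hSdef]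
        have e2 : (((s-K+1) * (t-K+1) : ℕ) : ℝ) = P * Q := by
          push_cast [Nat.cast_sub hKs, Nat.cast_sub hKt]
          rw [hPdef, hQdef]
        rw [← e1, ← e2]
        exact_mod_cast hmode
      have hQlb : ε * m ≤ Q := by
        by_contra h
        push_neg at h
        have h1 : (15/16)*δ*m ≤ (K:ℝ) := by
          have : (K:ℝ) = (t:ℝ) - Q + 1 := by rw [hQdef]; ring
          rw [this]; linarith
        have h2 : (15/16)*δ*m ≤ S := by
          have : S = ((m:ℝ) - s) - Q + 1 := by rw [hSdef, hQdef]; ring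
          rw [this]; linarith
        have h3 : ((15/16)*δ*m) * ((15/16)*δ*m) ≤ (K:ℝ) * S :=
          mul_le_mul h1 h2 (by positivity) hK0
        have h4 : P ≤ (m:ℝ) := by
          have : P = (s:ℝ) - t + Q := by rw [hPdef, hQdef]; ring
          rw [this]; linarith
        have h5 : P * Q ≤ (m:ℝ) * (ε*m) :=
          mul_le_mul h4 h.le (by linarith) (by linarith)
        rw [hεdef] at h5
        have h6 := h3.trans (hmodeR.trans h5)
        nlinarith only [h6, mul_pos (mul_pos hδ0 hM0) (mul_pos hδ0 hM0)]
      have hPlb : ε * m ≤ P := by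
        by_contra h
        push_neg at h
        have h1 : (15/16)*δ*m ≤ (K:ℝ) := by
          have : (K:ℝ) = (s:ℝ) - P + 1 := by rw [hPdef]; ring
          rw [this]; linarith
        have h2 : (15/16)*δ*m ≤ S := by
          have : S = ((m:ℝ) - t) - P + 1 := by rw [hSdef, hPdef]; ring
          rw [this]; linarith
        have h3 : ((15/16)*δ*m) * ((15/16)*δ*m) ≤ (K:ℝ) * S :=
          mul_le_mul h1 h2 (by positivity) hK0
        have h4 : Q ≤ (m:ℝ) := by
          have : Q = (t:ℝ) - s + P := by rw [hPdef, hQdef]; ring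
          rw [this]; linarith
        have h5 : P * Q ≤ (ε*m) * (m:ℝ) :=
          mul_le_mul h.le h4 (by linarith) (by positivity)
        rw [hεdef] at h5
        have h6 := h3.trans (hmodeR.trans h5)
        nlinarith only [h6, mul_pos (mul_pos hδ0 hM0) (mul_pos hδ0 hM0)]
      have hPQ : (ε*m) * (ε*m) ≤ P * Q :=
        mul_le_mul hPlb hQlb (by positivity) (by linarith)
      set L : ℕ := ⌊ε * Real.sqrt m / 6⌋₊ with hLdef
      have hl1 : (L:ℝ) ≤ ε * Real.sqrt m / 6 := Nat.floor_le (by positivity)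
      have hl2 : ε * Real.sqrt m / 6 - 1 < (L:ℝ) := by
        have h := Nat.lt_floor_add_one (ε * Real.sqrt m / 6)
        rw [hLdef]; push_cast; linarith
      have hl3 : ε * Real.sqrt m / 12 ≤ (L:ℝ) := by linarith
      have hL0 : (0:ℝ) ≤ (L:ℝ) := Nat.cast_nonneg L
      have hlm6 : (L:ℝ) ≤ ε * m / 6 := by linarith
      have hlm : (L:ℝ) ≤ (m:ℝ) := by
        nlinarith only [hlm6, mul_le_mul_of_nonneg_right hε1.le hM0.le, hM0]
      have hL1R : (1:ℝ) ≤ (L:ℝ) := by linarith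
      have hKL : K + L ≤ t := by
        have hr : (K:ℝ) + L ≤ (t:ℝ) := by
          have hq : (t:ℝ) - K = Q - 1 := by rw [hQdef]; ring
          linarith
        exact_mod_cast hr
      set η : ℝ := 8*(L:ℝ)/(ε^2 * m) with hηdef
      have hη0 : 0 ≤ η := by positivity
      have hsq2 : ε^2 * m = (ε * Real.sqrt m) * (ε * Real.sqrt m) := by
        rw [show (ε * Real.sqrt m) * (ε * Real.sqrt m)
              = ε^2 * (Real.sqrt m * Real.sqrt m) by ring, hsqsq]
      have hη9 : η ≤ 1/9 := by
        rw [hηdef, div_le_iff₀ (by positivity)]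
        nlinarith only [hl1, hsq2,
          mul_le_mul_of_nonneg_right hεsq (by positivity : (0:ℝ) ≤ ε * Real.sqrt m)]
      have hLη : (L:ℝ) * η ≤ 2/9 := by
        rw [hηdef, mul_div_assoc', div_le_iff₀ (by positivity)]
        nlinarith only [hsq2,
          mul_le_mul hl1 hl1 hL0 (by positivity : (0:ℝ) ≤ ε * Real.sqrt m / 6)]
      have hstep : ∀ i : ℕ, i < L →
          (1 - η) * ((s.choose (K+i) * (m-s).choose (t-(K+i)) : ℕ) : ℝ)
            ≤ ((s.choose (K+i+1) * (m-s).choose (t-(K+i+1)) : ℕ) : ℝ) := by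
        intro i hi
        have hiR : (i:ℝ) + 1 ≤ (L:ℝ) := by exact_mod_cast hi
        have hi0 : (0:ℝ) ≤ (i:ℝ) := Nat.cast_nonneg i
        have hjt : K + i < t := by omega
        have hid := rec10 m s t (K+i) hjt
        have hjs : K + i ≤ s := by
          have hr : (K:ℝ) + i ≤ (s:ℝ) := by
            have : (s:ℝ) - K = P - 1 := by rw [hPdef]; ring
            linarith only [hiR, hlm6, hPlb, hεm, this, hεm']
          exact_mod_cast hr
        have htj : t - (K+i+1) ≤ m - s := by omega
        have e1 : ((s.choose (K+i+1) * (m-s).choose (t-(K+i+1)) * ((K+i+1) * ((m-s) - (t-(K+i+1)))) : ℕ) : ℝ)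
            = ((s.choose (K+i+1) * (m-s).choose (t-(K+i+1)) : ℕ):ℝ) * (((K:ℝ)+i+1) * (S+i+1)) := by
          push_cast [Nat.cast_sub htj, Nat.cast_sub (show K+i+1 ≤ t by omega), hsmR]
          rw [hSdef]; ring
        have e2 : ((s.choose (K+i) * (m-s).choose (t-(K+i)) * ((s-(K+i)) * (t-(K+i))) : ℕ) : ℝ)
            = ((s.choose (K+i) * (m-s).choose (t-(K+i)) : ℕ):ℝ) * ((P-1-i) * (Q-1-i)) := by
          push_cast [Nat.cast_sub hjs, Nat.cast_sub (show K+i ≤ t by omega)]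
          rw [hPdef, hQdef]; ring
        have hidC := congrArg (Nat.cast : ℕ → ℝ) hid
        rw [e1, e2] at hidC
        have hD : (0:ℝ) < ((K:ℝ)+i+1) * (S+i+1) := by positivity
        have hb1 : ((K:ℝ)+i+1) * (S+i+1) ≤ P*Q + 3*(L:ℝ)*m := by
          have p1 : ((i:ℝ)+1) * ((K:ℝ)+S) ≤ (L:ℝ) * (2*m) :=
            mul_le_mul hiR (by linarith) (by linarith) hL0
          have p2 : ((i:ℝ)+1) * ((i:ℝ)+1) ≤ (L:ℝ) * m :=
            mul_le_mul hiR (by linarith) (by linarith) hL0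
          linarith only [hmodeR, p1, p2]
        have hb2 : P*Q - 4*(L:ℝ)*m ≤ (P-1-i) * (Q-1-i) := by
          have p1 : ((i:ℝ)+1) * (P+Q) ≤ (L:ℝ) * (2*m+2) :=
            mul_le_mul hiR (by linarith) (by linarith) hL0
          have p2 : (L:ℝ) * (2*m+2) ≤ 4*(L:ℝ)*m := by
            nlinarith only [mul_nonneg hL0 (sub_nonneg.mpr hM1)]
          nlinarith only [p1, p2, sq_nonneg ((i:ℝ)+1)]
        have hb3 : 8*(L:ℝ)*m ≤ η * (P*Q) := by
          rw [hηdef, div_mul_eq_mul_div, le_div_iff₀ (by positivity)]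
          nlinarith only [mul_le_mul_of_nonneg_left hPQ (by positivity : (0:ℝ) ≤ 8*(L:ℝ))]
        have hkey : (1-η) * (((K:ℝ)+i+1) * (S+i+1)) ≤ (P-1-i) * (Q-1-i) := by
          nlinarith only [hb2, hb3,
            mul_le_mul_of_nonneg_left hb1 (by linarith only [hη9] : (0:ℝ) ≤ 1 - η),
            mul_nonneg hη0 (by positivity : (0:ℝ) ≤ 3*(L:ℝ)*m),
            mul_nonneg hL0 hM0.le]
        have haj : (0:ℝ) ≤ ((s.choose (K+i) * (m-s).choose (t-(K+i)) : ℕ):ℝ) :=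
          Nat.cast_nonneg _
        have h6 : ((1-η) * ((s.choose (K+i) * (m-s).choose (t-(K+i)) : ℕ):ℝ)) * (((K:ℝ)+i+1) * (S+i+1))
            ≤ ((s.choose (K+i+1) * (m-s).choose (t-(K+i+1)) : ℕ):ℝ) * (((K:ℝ)+i+1) * (S+i+1)) := by
          rw [hidC]
          calc ((1-η) * ((s.choose (K+i) * (m-s).choose (t-(K+i)) : ℕ):ℝ)) * (((K:ℝ)+i+1) * (S+i+1))
              = ((s.choose (K+i) * (m-s).choose (t-(K+i)) : ℕ):ℝ) * ((1-η) * (((K:ℝ)+i+1) * (S+i+1))) := by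
                ring
            _ ≤ ((s.choose (K+i) * (m-s).choose (t-(K+i)) : ℕ):ℝ) * ((P-1-i) * (Q-1-i)) :=
                mul_le_mul_of_nonneg_left hkey haj
        exact le_of_mul_le_mul_right h6 hD
      have hind : ∀ i : ℕ, i ≤ L →
          (1 - (i:ℝ)*η) * ((s.choose K * (m-s).choose (t-K) : ℕ):ℝ)
            ≤ ((s.choose (K+i) * (m-s).choose (t-(K+i)) : ℕ):ℝ) := by
        intro i
        induction i with
        | zero => intro _; simp
        | succ n ih =>
          intro hn
          have h1 := ih (by omega)
          have h2 := hstep n (by omega)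
          have hAnn : (0:ℝ) ≤ ((s.choose K * (m-s).choose (t-K) : ℕ):ℝ) := Nat.cast_nonneg _
          have h3 : (1-η) * ((1 - (n:ℝ)*η) * ((s.choose K * (m-s).choose (t-K) : ℕ):ℝ))
              ≤ (1-η) * ((s.choose (K+n) * (m-s).choose (t-(K+n)) : ℕ):ℝ) :=
            mul_le_mul_of_nonneg_left h1 (by linarith)
          have h4 : (1 - ((n:ℝ)+1)*η) ≤ (1-η) * (1 - (n:ℝ)*η) := by
            nlinarith only [mul_nonneg (Nat.cast_nonneg n : (0:ℝ) ≤ (n:ℝ)) (mul_nonneg hη0 hη0)]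
          have h5 : (1 - ((n:ℝ)+1)*η) * ((s.choose K * (m-s).choose (t-K) : ℕ):ℝ)
              ≤ (1-η) * ((1 - (n:ℝ)*η) * ((s.choose K * (m-s).choose (t-K) : ℕ):ℝ)) := by
            rw [← mul_assoc]
            exact mul_le_mul_of_nonneg_right h4 hAnn
          have hfin : (1 - ((n:ℝ)+1)*η) * ((s.choose K * (m-s).choose (t-K) : ℕ):ℝ)
              ≤ ((s.choose (K+n+1) * (m-s).choose (t-(K+n+1)) : ℕ):ℝ) :=
            le_trans (le_trans h5 h3) h2
          have hc : ((n:ℕ)+1 : ℕ) = n+1 := rfl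
          have : K + (n+1) = K + n + 1 := by omega
          rw [this]
          push_cast at hfin ⊢
          linarith
      have hAR : (1:ℝ) ≤ ((s.choose K * (m-s).choose (t-K) : ℕ):ℝ) := by exact_mod_cast hA1
      have hbig : ∀ j ∈ Finset.Ico K (K+L),
          (3/4) * ((s.choose K * (m-s).choose (t-K) : ℕ):ℝ)
            ≤ ((s.choose j * (m-s).choose (t-j) : ℕ):ℝ) := by
        intro j hj
        rw [Finset.mem_Ico] at hj
        obtain ⟨hj1, hj2⟩ := hj
        have hje : j = K + (j - K) := by omega
        rw [hje]
        refine le_trans ?_ (hind (j-K) (by omega))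
        have hiL : ((j-K:ℕ):ℝ) ≤ (L:ℝ) := by exact_mod_cast (show j - K ≤ L by omega)
        have hiη : ((j-K:ℕ):ℝ) * η ≤ (L:ℝ) * η := mul_le_mul_of_nonneg_right hiL hη0
        apply mul_le_mul_of_nonneg_right ?_ (by linarith)
        linarith
      have hsumR : (L:ℝ) * ((3/4) * ((s.choose K * (m-s).choose (t-K) : ℕ):ℝ))
          ≤ ((m.choose t : ℕ):ℝ) := by
        have h1 : (Finset.Ico K (K+L)).card • ((3/4) * ((s.choose K * (m-s).choose (t-K) : ℕ):ℝ))
            ≤ ∑ j ∈ Finset.Ico K (K+L), ((s.choose j * (m-s).choose (t-j) : ℕ):ℝ) :=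
          Finset.card_nsmul_le_sum _ _ _ hbig
        rw [Nat.card_Ico] at h1
        have hc : K + L - K = L := by omega
        rw [hc, nsmul_eq_mul] at h1
        refine le_trans h1 ?_
        have h2 : ∑ j ∈ Finset.Ico K (K+L), ((s.choose j * (m-s).choose (t-j) : ℕ):ℝ)
            ≤ ∑ j ∈ Finset.range (t+1), ((s.choose j * (m-s).choose (t-j) : ℕ):ℝ) := by
          apply Finset.sum_le_sum_of_subset_of_nonneg
          · intro x hx
            rw [Finset.mem_Ico] at hx
            rw [Finset.mem_range]
            omega
          · intro x _ _
            positivity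
        refine le_trans h2 ?_
        rw [hsum]
        push_cast
        exact le_rfl
      rw [div_le_div_iff₀ hX0 hsqM]
      have hak : ((s.choose k * (m-s).choose (t-k) : ℕ):ℝ)
          ≤ ((s.choose K * (m-s).choose (t-K) : ℕ):ℝ) := by
        exact_mod_cast hKmax' k hkt
      have h12 : Real.sqrt m ≤ 12/ε * L := by
        rw [div_mul_eq_mul_div, le_div_iff₀ hε0]
        nlinarith only [hl3, hε0, hsqM]
      have hfin : ((s.choose K * (m-s).choose (t-K) : ℕ):ℝ) * Real.sqrt m
          ≤ 16/ε * ((m.choose t : ℕ):ℝ) := by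
        calc ((s.choose K * (m-s).choose (t-K) : ℕ):ℝ) * Real.sqrt m
            ≤ ((s.choose K * (m-s).choose (t-K) : ℕ):ℝ) * (12/ε * L) :=
              mul_le_mul_of_nonneg_left h12 (by linarith)
          _ = 16/ε * ((L:ℝ) * ((3/4) * ((s.choose K * (m-s).choose (t-K) : ℕ):ℝ))) := by
              ring
          _ ≤ 16/ε * ((m.choose t : ℕ):ℝ) :=
              mul_le_mul_of_nonneg_left hsumR (by positivity)
      calc ((s.choose k * (m-s).choose (t-k) : ℕ):ℝ) * Real.sqrt m
          ≤ ((s.choose K * (m-s).choose (t-K) : ℕ):ℝ) * Real.sqrt m :=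
            mul_le_mul_of_nonneg_right hak hsqM.le
        _ ≤ 16/ε * ((m.choose t : ℕ):ℝ) := hfin
end

section
/- Let γ be a self-avoiding walk of length n in ℤ^d ending at a point x with ‖x‖ = 1, and suppose max_k ⟨γ_k, e₁⟩ ≥ 2. Let h be an index achieving this maximum and let b be the walk obtained by concatenating γ[0,h] with the e₁-reflection of γ[h,n] through the hyperplane at height ⟨γ_h, e₁⟩. Then ‖b_n‖ > 1, and moreover ⟨b_n, e₁⟩ = 2⟨γ_h, e₁⟩ − ⟨x, e₁⟩, so that the unfolding height ⟨γ_h, e₁⟩ is one of the at most two integers among (⟨b_n,e₁⟩−1)/2, ⟨b_n,e₁⟩/2, (⟨b_n,e₁⟩+1)/2. -/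
/-- Simple unfolding of a walk ending next to the origin: if γ ends at x with ‖x‖=1
and reaches e₁-height ≥ 2, then the unfolded walk b satisfies
⟨b_n,e₁⟩ = 2⟨γ_h,e₁⟩ − ⟨x,e₁⟩ ≥ 3, hence ‖b_n‖ > 1, the unfolding height ⟨γ_h,e₁⟩ is
one of the three half-integers (⟨b_n,e₁⟩±1)/2, ⟨b_n,e₁⟩/2, of which at most two are
integers. -/
theorem stmt_12 (d n : ℕ) [NeZero d] (γ b : ℕ → Fin d → ℤ)
    (hγ : IsSAW d n γ) (hx : ∑ j, (γ n j) ^ 2 = 1)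
    (h : ℕ) (hh : h ≤ n)
    (hmax : ∀ k, k ≤ n → γ k 0 ≤ γ h 0) (hM : 2 ≤ γ h 0)
    (hb₁ : ∀ i, i ≤ h → b i = γ i)
    (hb₂ : ∀ i, h < i → ∀ j : Fin d,
        b i j = if j = (0 : Fin d) then 2 * γ h 0 - γ i 0 else γ i j) :
    b n 0 = 2 * γ h 0 - γ n 0 ∧
    2 * γ h 0 ∈ ({b n 0 - 1, b n 0, b n 0 + 1} : Set ℤ) ∧
    3 ≤ b n 0 ∧
    1 < ∑ j, (b n j) ^ 2 ∧
    ¬((2 : ℤ) ∣ (b n 0 - 1) ∧ (2 : ℤ) ∣ b n 0 ∧ (2 : ℤ) ∣ (b n 0 + 1)) := by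
  -- each coordinate of γ n has square ≤ 1
  have hsq : (γ n 0) ^ 2 ≤ 1 := by
    rw [← hx]
    exact Finset.single_le_sum (f := fun j => (γ n j) ^ 2)
      (fun j _ => sq_nonneg _) (Finset.mem_univ _)
  have habs : -1 ≤ γ n 0 ∧ γ n 0 ≤ 1 := by constructor <;> nlinarith
  -- h < n
  have hlt : h < n := by
    rcases lt_or_eq_of_le hh with h' | h'
    · exact h'
    · exfalso; rw [h'] at hM; nlinarith [habs.2]
  have hbn0 : b n 0 = 2 * γ h 0 - γ n 0 := by
    rw [hb₂ n hlt 0, if_pos rfl]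
  refine ⟨hbn0, ?_, ?_, ?_, ?_⟩
  · rcases habs with ⟨h1, h2⟩
    simp only [Set.mem_insert_iff, Set.mem_singleton_iff]
    interval_cases hγn : γ n 0 <;> simp [hbn0, hγn] <;> ring
  · omega
  · have hsum : ∑ j, (b n j) ^ 2 = (b n 0)^2 + ∑ j ∈ Finset.univ.erase 0, (γ n j) ^ 2 := by
      rw [← Finset.add_sum_erase _ _ (Finset.mem_univ (0 : Fin d))]
      congr 1
      refine Finset.sum_congr rfl fun j hj => ?_
      rw [hb₂ n hlt j, if_neg (Finset.ne_of_mem_erase hj)]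
    have h2 : (0:ℤ) ≤ ∑ j ∈ Finset.univ.erase (0 : Fin d), (γ n j) ^ 2 :=
      Finset.sum_nonneg fun j _ => sq_nonneg _
    have : 3 ≤ b n 0 := by omega
    nlinarith
  · rintro ⟨⟨a, ha⟩, ⟨c, hc⟩, -⟩
    omega
end

section
/- Fix d ≥ 2. If k is a z-renewal time of a self-avoiding walk γ of length n in ℤ^d, then for each unit vector u ∈ {±e₂, …, ±e_d}, the path γ^u obtained from γ by replacing the step γ_{k+2} − γ_{k+1} with u (i.e. γ^u_i = γ_i for i ≤ k+1 and γ^u_i = γ_i + (u − (γ_{k+2} − γ_{k+1})) for i ≥ k+2) is again a self-avoiding walk of length n, its endpoint has the same e₁-coordinate as γ_n, and the 2d−2 walks γ^u are pairwise distinct. -/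
lemma single_inj_aux {d : ℕ} (j j' : Fin d) (h : (Pi.single j 1 : Fin d → ℤ) = Pi.single j' 1) :
    j = j' := by
  by_contra hne
  have := congrFun h j
  rw [Pi.single_eq_same, Pi.single_eq_of_ne hne] at this
  exact one_ne_zero this

lemma single_ne_neg_aux {d : ℕ} (j j' : Fin d) :
    (Pi.single j 1 : Fin d → ℤ) ≠ -Pi.single j' 1 := by
  intro h
  have := congrFun h j
  rw [Pi.single_eq_same, Pi.neg_apply] at this
  rcases eq_or_ne j j' with rfl | hne
  · rw [Pi.single_eq_same] at this; omega
  · rw [Pi.single_eq_of_ne hne] at this; omega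

/-- Resampling the horizontal step at a z-renewal time: replacing the step
γ_{k+2} − γ_{k+1} by any u ∈ {±e₂,…,±e_d} yields again a self-avoiding walk with the
same e₁-coordinate of the endpoint, and the 2d−2 resulting walks are pairwise
distinct. -/
theorem stmt_13 (d n : ℕ) (hd : 2 ≤ d) [NeZero d] (γ : ℕ → Fin d → ℤ)
    (hγ : IsSAW d n γ) (k : ℕ) (hk : k + 2 ≤ n)
    (hz1 : ∀ i, i < k + 1 → γ i 0 < γ (k + 1) 0)
    (hz2 : γ (k + 1) 0 = γ (k + 2) 0)
    (hz3 : ∀ i, k + 2 < i → i ≤ n → γ (k + 1) 0 < γ i 0)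
    (g : (Fin d → ℤ) → ℕ → Fin d → ℤ)
    (hg : ∀ u i, g u i = if i ≤ k + 1 then γ i
      else γ i + (u - (γ (k + 2) - γ (k + 1)))) :
    (∀ u : Fin d → ℤ,
      (∃ j : Fin d, j ≠ 0 ∧ (u = Pi.single j 1 ∨ u = -Pi.single j 1)) →
      IsSAW d n (g u) ∧ g u n 0 = γ n 0) ∧
    (∀ u u' : Fin d → ℤ,
      (∃ j : Fin d, j ≠ 0 ∧ (u = Pi.single j 1 ∨ u = -Pi.single j 1)) →
      (∃ j : Fin d, j ≠ 0 ∧ (u' = Pi.single j 1 ∨ u' = -Pi.single j 1)) →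
      g u = g u' → u = u') ∧
    Nat.card {u : Fin d → ℤ //
        ∃ j : Fin d, j ≠ 0 ∧ (u = Pi.single j 1 ∨ u = -Pi.single j 1)}
      = 2 * d - 2 := by
  obtain ⟨h0, hstep, hinj⟩ := hγ
  refine ⟨?_, ?_, ?_⟩
  · rintro u ⟨j, hj, hu⟩
    have hu0 : u 0 = 0 := by
      rcases hu with h | h <;> subst h <;>
        simp [Pi.single_eq_of_ne (Ne.symm hj)]
    have hune : u j ≠ 0 := by
      rcases hu with h | h <;> subst h <;> simp
    have husum : ∑ j', |u j'| = 1 := by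
      have habs : ∀ j', |u j'| = (Pi.single j 1 : Fin d → ℤ) j' := by
        intro j'
        rcases eq_or_ne j' j with rfl | hne
        · rw [Pi.single_eq_same]
          rcases hu with h | h <;> subst h <;> simp
        · rw [Pi.single_eq_of_ne hne]
          rcases hu with h | h <;> subst h <;>
            simp [Pi.single_eq_of_ne hne]
      simp [habs, Finset.sum_pi_single']
    have hg0 : ∀ i, g u i 0 = γ i 0 := by
      intro i
      rw [hg]
      split
      · rfl
      · simp only [Pi.add_apply, Pi.sub_apply]
        rw [hu0, ← hz2]; ring
    have hmix : ∀ i i', i ≤ k + 1 → k + 2 ≤ i' → i' ≤ n → g u i = g u i' → False := by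
      intro i i' hi hi' hi'n heq
      have h00 : γ i 0 = γ i' 0 := by rw [← hg0 i, ← hg0 i', heq]
      rcases eq_or_lt_of_le hi' with rfl | hlt
      · have hi1 : i = k + 1 := by
          by_contra h
          have hlt' := hz1 i (lt_of_le_of_ne hi h)
          rw [h00, ← hz2] at hlt'
          exact lt_irrefl _ hlt'
        subst hi1
        have h1 : g u (k + 1) j = γ (k + 1) j := by rw [hg]; rw [if_pos (le_refl _)]
        have h2 : g u (k + 2) j = γ (k + 2) j + (u j - (γ (k + 2) j - γ (k + 1) j)) := by
          rw [hg]; rw [if_neg (by omega)]; simp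
        have := congrFun heq j
        rw [h1, h2] at this
        apply hune
        linarith
      · have := hz3 i' hlt hi'n
        have hle : γ i 0 ≤ γ (k + 1) 0 := by
          rcases eq_or_lt_of_le hi with rfl | hlt'
          · exact le_refl _
          · exact le_of_lt (hz1 i hlt')
        linarith
    refine ⟨⟨?_, ?_, ?_⟩, hg0 n⟩
    · rw [hg]; rw [if_pos (by omega)]; exact h0
    · intro i hi
      rcases lt_trichotomy i (k + 1) with hlt | rfl | hgt
      · have e1 : g u (i + 1) = γ (i + 1) := by rw [hg]; rw [if_pos (by omega)]
        have e2 : g u i = γ i := by rw [hg]; rw [if_pos (by omega)]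
        rw [e1, e2]; exact hstep i hi
      · have e : ∀ j', g u (k + 1 + 1) j' - g u (k + 1) j' = u j' := by
          intro j'
          rw [hg, hg, if_neg (by omega), if_pos (le_refl _)]
          show γ (k + 2) j' + (u j' - (γ (k + 2) j' - γ (k + 1) j')) - γ (k + 1) j' = u j'
          ring
        simp only [e]; exact husum
      · have e1 : g u (i + 1) = γ (i + 1) + (u - (γ (k + 2) - γ (k + 1))) := by
          rw [hg]; rw [if_neg (by omega)]
        have e2 : g u i = γ i + (u - (γ (k + 2) - γ (k + 1))) := by
          rw [hg]; rw [if_neg (by omega)]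
        rw [e1, e2]
        have : ∀ j', γ (i + 1) j' + (u j' - (γ (k + 2) j' - γ (k + 1) j'))
            - (γ i j' + (u j' - (γ (k + 2) j' - γ (k + 1) j'))) = γ (i + 1) j' - γ i j' := by
          intro j'; ring
        simp only [Pi.add_apply, Pi.sub_apply, this]
        exact hstep i hi
    · intro i hi i' hi' heq
      rcases le_or_gt i (k + 1) with h1 | h1 <;> rcases le_or_gt i' (k + 1) with h2 | h2
      · apply hinj i hi i' hi'
        rw [hg, hg, if_pos h1, if_pos h2] at heq
        exact heq
      · exact absurd (hmix i i' h1 (by omega) hi' heq) (fun h => h.elim)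
      · exact absurd (hmix i' i h2 (by omega) hi heq.symm) (fun h => h.elim)
      · apply hinj i hi i' hi'
        rw [hg, hg, if_neg (by omega), if_neg (by omega)] at heq
        exact add_right_cancel heq
  · rintro u u' ⟨j, hj, hu⟩ ⟨j', hj', hu'⟩ heq
    have h1 : g u (k + 2) = g u' (k + 2) := congrFun heq (k + 2)
    rw [hg, hg, if_neg (by omega), if_neg (by omega)] at h1
    have h2 := add_left_cancel h1
    exact sub_left_injective h2
  · have e : ({j : Fin d // j ≠ 0} × Bool) ≃
        {u : Fin d → ℤ // ∃ j : Fin d, j ≠ 0 ∧ (u = Pi.single j 1 ∨ u = -Pi.single j 1)} := by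
      refine Equiv.ofBijective
        (fun p => ⟨if p.2 then Pi.single p.1.1 1 else -Pi.single p.1.1 1,
          p.1.1, p.1.2, by cases p.2 <;> simp⟩) ⟨?_, ?_⟩
      · rintro ⟨⟨j, hj⟩, b⟩ ⟨⟨j', hj'⟩, b'⟩ h
        simp only [Subtype.mk.injEq] at h
        cases b <;> cases b' <;> simp only [if_true, if_false, Bool.false_eq_true] at h
        · have := single_inj_aux j j' (neg_injective h)
          subst this; rfl
        · exact absurd h.symm (single_ne_neg_aux j' j)
        · exact absurd h (single_ne_neg_aux j j')
        · have := single_inj_aux j j' h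
          subst this; rfl
      · rintro ⟨u, j, hj, hu⟩
        rcases hu with rfl | rfl
        · exact ⟨⟨⟨j, hj⟩, true⟩, rfl⟩
        · exact ⟨⟨⟨j, hj⟩, false⟩, rfl⟩
    rw [← Nat.card_congr e, Nat.card_prod]
    have h1 : Nat.card {j : Fin d // j ≠ 0} = d - 1 := by
      rw [Nat.card_eq_fintype_card]
      simp [Fintype.card_subtype_compl, Fintype.card_subtype_eq]
    have h2 : Nat.card Bool = 2 := by simp [Nat.card_eq_fintype_card]
    rw [h1, h2]
    omega
end

section
/- For every ε > 0 there exists M ∈ ℕ such that for all n, h > 0 and x ∈ ℤ^d (d ≥ 2): the uniform measure on self-avoiding bridges of length n with at least M z-renewal times and with ⟨Γ_n, e₁⟩ = h gives probability at most ε to the event Γ_n = x. Concretely, M = ⌈log ε / log(1/(2d−1))⌉ works via the resampling map at z-renewal times. -/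
def IsBridge (d n : ℕ) [NeZero d] (γ : ℕ → Fin d → ℤ) : Prop :=
  IsSAW d n γ ∧ ∀ kk, 0 < kk → kk ≤ n → 0 < γ kk 0 ∧ γ kk 0 ≤ γ n 0

def IsZRenewal (d n : ℕ) [NeZero d] (γ : ℕ → Fin d → ℤ) (k : ℕ) : Prop :=
  k + 2 ≤ n ∧ (∀ i, i < k + 1 → γ i 0 < γ (k + 1) 0) ∧
    γ (k + 1) 0 = γ (k + 2) 0 ∧
    ∀ i, k + 2 < i → i ≤ n → γ (k + 1) 0 < γ i 0

noncomputable def zRenCount (d n : ℕ) [NeZero d] (γ : ℕ → Fin d → ℤ) : ℕ :=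
  Nat.card {k : ℕ // IsZRenewal d n γ k}

/-- Bridges of length n, with at least M z-renewal times, endpoint at e₁-height hgt,
frozen after time n (so the set is finite). -/
def BridgeSet (d n M : ℕ) [NeZero d] (hgt : ℤ) : Set (ℕ → Fin d → ℤ) :=
  {γ | IsBridge d n γ ∧ M ≤ zRenCount d n γ ∧ γ n 0 = hgt ∧ ∀ i, n ≤ i → γ i = γ n}

open Finset
open scoped Classical

/-! Flipping the sign of the horizontal step at a z-renewal time yields another bridge with the
same heights and the same z-renewal times, so the bridges split into orbits of size `2 ^ R` under
these flips, where `R ≥ M` is the number of z-renewal times. Normalising every such step to have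
nonnegative entries picks a representative `β` of each orbit, and flipping a set `T` of steps
lowers the coordinate sum of the endpoint of `β` by `2 * #T`. Hence the walks of an orbit that
end at `x` all flip the same number of steps: there are at most `R.choose (R / 2)` of them, a
fraction at most `ε` of the orbit once `R ≥ M`, by `centralBinom r ^ 2 * (2 * r + 1) ≤ 16 ^ r`. -/

theorem Nat.choose_succ_middle_le (R : ℕ) :
    (R + 1).choose ((R + 1) / 2) ≤ 2 * R.choose (R / 2) := by
  rcases h : (R + 1) / 2 with _ | k
  · obtain rfl : R = 0 := by omega
    simp
  · rw [Nat.choose_succ_succ]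
    have := Nat.choose_le_middle k R
    have := Nat.choose_le_middle k.succ R
    omega

theorem Nat.choose_middle_mul_two_pow_le {M R : ℕ} (h : M ≤ R) :
    R.choose (R / 2) * 2 ^ M ≤ M.choose (M / 2) * 2 ^ R := by
  induction R, h using Nat.le_induction with
  | base => rfl
  | succ R _ ih =>
    calc (R + 1).choose ((R + 1) / 2) * 2 ^ M ≤ 2 * (R.choose (R / 2) * 2 ^ M) := by
          rw [← mul_assoc]; exact Nat.mul_le_mul_right _ (Nat.choose_succ_middle_le R)
      _ ≤ M.choose (M / 2) * 2 ^ (R + 1) := by rw [pow_succ]; nlinarith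

theorem Nat.centralBinom_sq_mul_le (r : ℕ) : r.centralBinom ^ 2 * (2 * r + 1) ≤ 16 ^ r := by
  induction r with
  | zero => simp
  | succ r ih =>
    have hrec := Nat.succ_mul_centralBinom_succ r
    have key : (r + 1) ^ 2 * ((r + 1).centralBinom ^ 2 * (2 * (r + 1) + 1)) ≤
        (r + 1) ^ 2 * 16 ^ (r + 1) := by
      calc (r + 1) ^ 2 * ((r + 1).centralBinom ^ 2 * (2 * (r + 1) + 1))
          = 4 * (2 * r + 1) * (2 * r + 3) * (r.centralBinom ^ 2 * (2 * r + 1)) := by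
            rw [← mul_assoc, ← mul_pow, hrec]; ring
        _ ≤ 4 * (2 * r + 1) * (2 * r + 3) * 16 ^ r := Nat.mul_le_mul_left _ ih
        _ ≤ (r + 1) ^ 2 * 16 ^ (r + 1) := by
            rw [pow_succ 16 r]; nlinarith [Nat.zero_le (16 ^ r)]
    exact Nat.le_of_mul_le_mul_left key (by positivity)

theorem exists_forall_choose_middle_le {ε : ℝ} (hε : 0 < ε) :
    ∃ M : ℕ, ∀ R, M ≤ R → (R.choose (R / 2) : ℝ) ≤ ε * 2 ^ R := by
  obtain ⟨r, hr⟩ := exists_nat_ge (ε⁻¹ ^ 2)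
  have hcentral : (r.centralBinom : ℝ) ≤ ε * 4 ^ r := by
    have hsq : (r.centralBinom : ℝ) ^ 2 * (2 * r + 1) ≤ 16 ^ r := by
      exact_mod_cast Nat.centralBinom_sq_mul_le r
    have hεr : 1 ≤ ε ^ 2 * (2 * r + 1) := by
      rw [inv_pow] at hr
      rw [inv_le_iff_one_le_mul₀ (by positivity)] at hr
      nlinarith
    refine le_of_pow_le_pow_left₀ two_ne_zero (by positivity) ?_
    calc (r.centralBinom : ℝ) ^ 2 ≤ (r.centralBinom : ℝ) ^ 2 * (ε ^ 2 * (2 * r + 1)) :=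
          le_mul_of_one_le_right (by positivity) hεr
      _ ≤ ε ^ 2 * 16 ^ r := by nlinarith
      _ = (ε * 4 ^ r) ^ 2 := by rw [mul_pow, ← pow_mul, mul_comm r, pow_mul]; norm_num
  refine ⟨2 * r, fun R hR => ?_⟩
  have hmono : (R.choose (R / 2) : ℝ) * 4 ^ r ≤ r.centralBinom * 2 ^ R := by
    have := Nat.choose_middle_mul_two_pow_le hR
    rw [show 2 * r / 2 = r by omega, pow_mul, ← Nat.centralBinom_eq_two_mul_choose] at this
    exact_mod_cast this
  refine le_of_mul_le_mul_right ?_ (by positivity : (0 : ℝ) < 4 ^ r)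
  calc (R.choose (R / 2) : ℝ) * 4 ^ r ≤ r.centralBinom * 2 ^ R := hmono
    _ ≤ ε * 4 ^ r * 2 ^ R := by gcongr
    _ = ε * 2 ^ R * 4 ^ r := by ring

theorem Finset.card_filter_le_mul_card_of_fibers {α β : Type*} [DecidableEq β] (f : α → β)
    (s : Finset α) (p : α → Prop) [DecidablePred p] {ε : ℝ}
    (h : ∀ b ∈ s.image f, (#{a ∈ s | f a = b ∧ p a} : ℝ) ≤ ε * #{a ∈ s | f a = b}) :
    (#{a ∈ s | p a} : ℝ) ≤ ε * #s := by
  rw [card_eq_sum_card_image f s,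
    card_eq_sum_card_fiberwise (t := s.image f) fun a ha => mem_image_of_mem f (mem_filter.1 ha).1]
  push_cast
  rw [mul_sum]
  refine sum_le_sum fun b hb => ?_
  simpa only [filter_filter, and_comm] using h b hb

theorem eq_abs_or_eq_neg_abs_of_sum_abs_eq_one {ι : Type*} [Fintype ι] {v : ι → ℤ}
    (h : ∑ j, |v j| = 1) : v = |v| ∨ v = -|v| := by
  by_contra! hv
  obtain ⟨i, hi⟩ : ∃ i, v i < 0 := by
    by_contra! H
    exact hv.1 (funext fun i => (abs_of_nonneg (H i)).symm)
  obtain ⟨j, hj⟩ : ∃ j, 0 < v j := by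
    by_contra! H
    exact hv.2 (funext fun j => by simp [abs_of_nonpos (H j)])
  have hij : i ≠ j := by rintro rfl; omega
  have := sum_le_univ_sum_of_nonneg (s := {i, j}) (f := fun j => |v j|) fun _ => abs_nonneg _
  rw [sum_pair hij, h, abs_of_neg hi, abs_of_pos hj] at this
  omega

section Resampling

variable {d n : ℕ} [NeZero d]

def IsLateralUnit (v : Fin d → ℤ) : Prop := ∑ j, |v j| = 1 ∧ v 0 = 0

noncomputable def renewalTimes (d n : ℕ) [NeZero d] (γ : ℕ → Fin d → ℤ) : Finset ℕ :=
  {k ∈ range n | IsZRenewal d n γ k}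

def renewalStep (γ : ℕ → Fin d → ℤ) (k : ℕ) : Fin d → ℤ := γ (k + 2) - γ (k + 1)

/-- Replaces the step `(k + 1, k + 2)` at each z-renewal time `k` by `t k`, translating the rest
of the walk accordingly. -/
noncomputable def resample (d n : ℕ) [NeZero d] (γ t : ℕ → Fin d → ℤ) : ℕ → Fin d → ℤ :=
  fun m => γ m + ∑ k ∈ renewalTimes d n γ with k + 2 ≤ m, (t k - renewalStep γ k)

variable {γ t t' : ℕ → Fin d → ℤ} {i k m : ℕ}

theorem mem_renewalTimes : k ∈ renewalTimes d n γ ↔ IsZRenewal d n γ k := by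
  simp only [renewalTimes, mem_filter, mem_range, and_iff_right_iff_imp]
  intro hk
  have := hk.1
  omega

theorem zRenCount_eq_card_renewalTimes : zRenCount d n γ = #(renewalTimes d n γ) := by
  rw [zRenCount, ← Nat.card_eq_finsetCard]
  exact Nat.card_congr (Equiv.subtypeEquivRight fun _ => mem_renewalTimes.symm)

theorem IsZRenewal.renewalStep_zero (hk : IsZRenewal d n γ k) : renewalStep γ k 0 = 0 := by
  simp [renewalStep, hk.2.2.1]

theorem IsZRenewal.isLateralUnit (hγ : IsSAW d n γ) (hk : IsZRenewal d n γ k) :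
    IsLateralUnit (renewalStep γ k) :=
  ⟨by simpa [renewalStep] using hγ.2.1 (k + 1) (by have := hk.1; omega), hk.renewalStep_zero⟩

theorem IsZRenewal.eq_of_height_eq (hk : IsZRenewal d n γ k) (hi : i ≤ k + 1)
    (hm : k + 2 ≤ m) (hmn : m ≤ n) (h : γ i 0 = γ m 0) : i = k + 1 ∧ m = k + 2 := by
  obtain ⟨-, hbelow, hflat, habove⟩ := hk
  have hle : γ (k + 1) 0 ≤ γ m 0 := by
    rcases hm.eq_or_lt with rfl | hlt
    · exact hflat.le
    · exact (habove m hlt hmn).le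
  obtain rfl : i = k + 1 := by
    by_contra hne
    have := hbelow i (by omega)
    omega
  refine ⟨rfl, ?_⟩
  by_contra hne
  have := habove m (by omega) hmn
  omega

theorem isZRenewal_iff_of_height_eq {γ' : ℕ → Fin d → ℤ} (h : ∀ m, γ' m 0 = γ m 0) :
    IsZRenewal d n γ' k ↔ IsZRenewal d n γ k := by
  simp only [IsZRenewal, h]

theorem resample_height (ht : ∀ k ∈ renewalTimes d n γ, t k 0 = 0) (m : ℕ) :
    resample d n γ t m 0 = γ m 0 := by
  simp only [resample, Pi.add_apply, Finset.sum_apply, Pi.sub_apply, add_eq_left]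
  refine sum_eq_zero fun k hk => ?_
  have hk := (mem_filter.1 hk).1
  rw [ht k hk, (mem_renewalTimes.1 hk).renewalStep_zero, sub_self]

theorem renewalTimes_resample (ht : ∀ k ∈ renewalTimes d n γ, t k 0 = 0) :
    renewalTimes d n (resample d n γ t) = renewalTimes d n γ := by
  ext k
  simp only [mem_renewalTimes, isZRenewal_iff_of_height_eq (resample_height ht)]

theorem resample_sub (him : i ≤ m) :
    resample d n γ t m - resample d n γ t i = γ m - γ i +
      ∑ k ∈ renewalTimes d n γ with i < k + 2 ∧ k + 2 ≤ m, (t k - renewalStep γ k) := by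
  simp only [resample]
  rw [← sum_filter_add_sum_filter_not {k ∈ renewalTimes d n γ | k + 2 ≤ m} (· + 2 ≤ i),
    filter_filter, filter_filter,
    filter_congr (p := fun k => k + 2 ≤ m ∧ k + 2 ≤ i) (q := (· + 2 ≤ i)) (by intros; omega),
    filter_congr (p := fun k => k + 2 ≤ m ∧ ¬k + 2 ≤ i) (q := fun k => i < k + 2 ∧ k + 2 ≤ m)
      (by intros; omega)]
  abel

theorem renewalStep_resample (hk : k ∈ renewalTimes d n γ) :
    renewalStep (resample d n γ t) k = t k := by
  rw [renewalStep, resample_sub (by omega),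
    filter_congr (q := (· = k)) fun k' hk' => by omega, filter_eq' _ _, if_pos hk,
    sum_singleton, renewalStep]
  abel

theorem resample_succ_sub_of_forall_ne (hi : ∀ k ∈ renewalTimes d n γ, k + 1 ≠ i) :
    resample d n γ t (i + 1) - resample d n γ t i = γ (i + 1) - γ i := by
  rw [resample_sub (by omega), filter_false_of_mem fun k hk => by have := hi k hk; omega,
    sum_empty, add_zero]

theorem resample_apply_zero : resample d n γ t 0 = γ 0 := by
  simp [resample]

theorem resample_apply_of_le (hm : n ≤ m) :
    resample d n γ t m = γ m + ∑ k ∈ renewalTimes d n γ, (t k - renewalStep γ k) := by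
  rw [resample, filter_true_of_mem fun k hk => by have := (mem_renewalTimes.1 hk).1; omega]

theorem resample_congr (h : ∀ k ∈ renewalTimes d n γ, t k = t' k) :
    resample d n γ t = resample d n γ t' := by
  funext m
  simp only [resample]
  congr 1
  exact sum_congr rfl fun k hk => by rw [h k (mem_filter.1 hk).1]

theorem resample_renewalStep : resample d n γ (renewalStep γ) = γ := by
  funext m
  simp [resample]

theorem resample_resample (ht : ∀ k ∈ renewalTimes d n γ, t k 0 = 0) :
    resample d n (resample d n γ t) t' = resample d n γ t' := by
  funext m
  have hsteps : ∑ k ∈ renewalTimes d n γ with k + 2 ≤ m,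
      (t' k - renewalStep (resample d n γ t) k) =
        ∑ k ∈ renewalTimes d n γ with k + 2 ≤ m, (t' k - t k) :=
    sum_congr rfl fun k hk => by rw [renewalStep_resample (mem_filter.1 hk).1]
  rw [resample, renewalTimes_resample ht, hsteps, resample, add_assoc, ← sum_add_distrib]
  congr 1
  exact sum_congr rfl fun k _ => by abel

end Resampling

section Bridges

variable {d n M : ℕ} [NeZero d] {hgt : ℤ} {γ t : ℕ → Fin d → ℤ} {i m : ℕ}

theorem IsLateralUnit.ne_zero {v : Fin d → ℤ} (hv : IsLateralUnit v) : v ≠ 0 := by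
  rintro rfl
  simpa using hv.1

theorem IsLateralUnit.neg {v : Fin d → ℤ} (hv : IsLateralUnit v) : IsLateralUnit (-v) := by
  simpa [IsLateralUnit] using hv

theorem IsLateralUnit.abs {v : Fin d → ℤ} (hv : IsLateralUnit v) : IsLateralUnit |v| := by
  simpa [IsLateralUnit] using hv

theorem resample_ne_of_lt (hγ : IsSAW d n γ)
    (ht : ∀ k ∈ renewalTimes d n γ, IsLateralUnit (t k)) (him : i < m) (hmn : m ≤ n) :
    resample d n γ t i ≠ resample d n γ t m := by
  intro heq
  by_cases hcross : ∃ k ∈ renewalTimes d n γ, i < k + 2 ∧ k + 2 ≤ m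
  · obtain ⟨k, hkR, hik, hkm⟩ := hcross
    have hheight : γ i 0 = γ m 0 := by
      simpa only [resample_height fun k hk => (ht k hk).2] using congrFun heq 0
    obtain ⟨rfl, rfl⟩ :=
      (mem_renewalTimes.1 hkR).eq_of_height_eq (by omega) hkm hmn hheight
    apply (ht k hkR).ne_zero
    rw [← renewalStep_resample (t := t) hkR, renewalStep, ← heq, sub_self]
  · have hsub := resample_sub (n := n) (t := t) (γ := γ) him.le
    rw [heq, sub_self, filter_false_of_mem (by simpa using hcross), sum_empty, add_zero,
      eq_comm, sub_eq_zero] at hsub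
    exact him.ne' (hγ.2.2 m hmn i (by omega) hsub)

theorem isSAW_resample (hγ : IsSAW d n γ)
    (ht : ∀ k ∈ renewalTimes d n γ, IsLateralUnit (t k)) : IsSAW d n (resample d n γ t) := by
  refine ⟨by rw [resample_apply_zero, hγ.1], fun i hi => ?_, fun i hi m hm heq => ?_⟩
  · show ∑ j, |(resample d n γ t (i + 1) - resample d n γ t i) j| = 1
    by_cases hren : ∃ k ∈ renewalTimes d n γ, k + 1 = i
    · obtain ⟨k, hk, rfl⟩ := hren
      rw [← renewalStep, renewalStep_resample hk]
      exact (ht k hk).1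
    · push Not at hren
      rw [resample_succ_sub_of_forall_ne hren]
      exact hγ.2.1 i hi
  · by_contra hne
    rcases lt_or_gt_of_ne hne with h | h
    · exact resample_ne_of_lt hγ ht h hm heq
    · exact resample_ne_of_lt hγ ht h hi heq.symm

theorem resample_mem_bridgeSet (hγ : γ ∈ BridgeSet d n M hgt)
    (ht : ∀ k ∈ renewalTimes d n γ, IsLateralUnit (t k)) :
    resample d n γ t ∈ BridgeSet d n M hgt := by
  obtain ⟨⟨hsaw, hbridge⟩, hM, hend, hfrozen⟩ := hγ
  have ht0 : ∀ k ∈ renewalTimes d n γ, t k 0 = 0 := fun k hk => (ht k hk).2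
  refine ⟨⟨isSAW_resample hsaw ht, by simpa only [resample_height ht0] using hbridge⟩, ?_,
    by rw [resample_height ht0, hend], fun i hi => ?_⟩
  · rwa [zRenCount_eq_card_renewalTimes, renewalTimes_resample ht0,
      ← zRenCount_eq_card_renewalTimes]
  · rw [resample_apply_of_le hi, resample_apply_of_le le_rfl, hfrozen i hi]

noncomputable def normalizeSteps (d n : ℕ) [NeZero d] (γ : ℕ → Fin d → ℤ) : ℕ → Fin d → ℤ :=
  resample d n γ fun k => |renewalStep γ k|

noncomputable def flipSteps (d n : ℕ) [NeZero d] (β : ℕ → Fin d → ℤ) (T : Finset ℕ) :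
    ℕ → Fin d → ℤ :=
  resample d n β fun k => if k ∈ T then -renewalStep β k else renewalStep β k

variable {β : ℕ → Fin d → ℤ} {T : Finset ℕ}

theorem renewalTimes_normalizeSteps :
    renewalTimes d n (normalizeSteps d n γ) = renewalTimes d n γ :=
  renewalTimes_resample fun _ hk => by simp [(mem_renewalTimes.1 hk).renewalStep_zero]

theorem renewalStep_normalizeSteps {k : ℕ} (hk : k ∈ renewalTimes d n γ) :
    renewalStep (normalizeSteps d n γ) k = |renewalStep γ k| :=
  renewalStep_resample hk

theorem normalizeSteps_mem_bridgeSet (hγ : γ ∈ BridgeSet d n M hgt) :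
    normalizeSteps d n γ ∈ BridgeSet d n M hgt :=
  resample_mem_bridgeSet hγ fun _ hk => ((mem_renewalTimes.1 hk).isLateralUnit hγ.1.1).abs

theorem normalizeSteps_idem :
    normalizeSteps d n (normalizeSteps d n γ) = normalizeSteps d n γ := by
  rw [normalizeSteps, normalizeSteps, resample_resample fun _ hk => by
    simp [(mem_renewalTimes.1 hk).renewalStep_zero]]
  exact resample_congr fun k hk => by rw [renewalStep_resample hk, abs_abs]

theorem renewalStep_eq_abs_of_normalizeSteps_eq (hβ : normalizeSteps d n β = β)
    {k : ℕ} (hk : k ∈ renewalTimes d n β) : renewalStep β k = |renewalStep β k| := by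
  conv_lhs => rw [← hβ]
  exact renewalStep_normalizeSteps hk

theorem flipSteps_mem_bridgeSet (hβ : β ∈ BridgeSet d n M hgt) :
    flipSteps d n β T ∈ BridgeSet d n M hgt := by
  refine resample_mem_bridgeSet hβ fun k hk => ?_
  have hw := (mem_renewalTimes.1 hk).isLateralUnit hβ.1.1
  split_ifs
  exacts [hw.neg, hw]

theorem normalizeSteps_flipSteps (hβ : normalizeSteps d n β = β) :
    normalizeSteps d n (flipSteps d n β T) = β := by
  rw [normalizeSteps, flipSteps, resample_resample fun _ hk => by
    split_ifs <;> simp [(mem_renewalTimes.1 hk).renewalStep_zero]]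
  conv_rhs => rw [← resample_renewalStep (d := d) (n := n) (γ := β)]
  refine resample_congr fun k hk => ?_
  rw [renewalStep_resample hk, renewalStep_eq_abs_of_normalizeSteps_eq hβ hk]
  split_ifs <;> simp

theorem exists_flipSteps_normalizeSteps_eq (hγ : IsSAW d n γ) :
    ∃ T ⊆ renewalTimes d n γ, flipSteps d n (normalizeSteps d n γ) T = γ := by
  refine ⟨{k ∈ renewalTimes d n γ | renewalStep γ k ≠ |renewalStep γ k|}, filter_subset _ _, ?_⟩
  rw [flipSteps, normalizeSteps, resample_resample fun _ hk => by
    simp [(mem_renewalTimes.1 hk).renewalStep_zero]]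
  conv_rhs => rw [← resample_renewalStep (d := d) (n := n) (γ := γ)]
  refine resample_congr fun k hk => ?_
  rw [← normalizeSteps, renewalStep_normalizeSteps hk]
  simp only [mem_filter, hk, true_and]
  split_ifs with hflip
  · have hunit := ((mem_renewalTimes.1 hk).isLateralUnit hγ).1
    exact ((eq_abs_or_eq_neg_abs_of_sum_abs_eq_one hunit).resolve_left hflip).symm
  · exact (not_not.1 hflip).symm

theorem renewalStep_flipSteps {k : ℕ} (hk : k ∈ renewalTimes d n β) :
    renewalStep (flipSteps d n β T) k =
      if k ∈ T then -renewalStep β k else renewalStep β k :=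
  renewalStep_resample hk

theorem flipSteps_injOn (hβ : IsSAW d n β) :
    Set.InjOn (flipSteps d n β) (renewalTimes d n β).powerset := by
  intro T hT T' hT' h
  ext k
  by_cases hk : k ∈ renewalTimes d n β
  · have hstep := congrArg (renewalStep · k) h
    simp only [renewalStep_flipSteps hk] at hstep
    have hne := ((mem_renewalTimes.1 hk).isLateralUnit hβ).ne_zero
    split_ifs at hstep with hkT hkT' hkT'
    · exact iff_of_true hkT hkT'
    · exact absurd (self_eq_neg.1 hstep.symm) hne
    · exact absurd (self_eq_neg.1 hstep) hne
    · exact iff_of_false hkT hkT'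
  · exact iff_of_false (fun h => hk (mem_powerset.1 hT h)) (fun h => hk (mem_powerset.1 hT' h))

theorem sum_flipSteps_apply (hβ : IsSAW d n β) (hfix : normalizeSteps d n β = β)
    (hT : T ⊆ renewalTimes d n β) :
    ∑ j, flipSteps d n β T n j = ∑ j, β n j - 2 * #T := by
  have hunit : ∀ k ∈ T, ∑ j, renewalStep β k j = 1 := fun k hk => by
    have := ((mem_renewalTimes.1 (hT hk)).isLateralUnit hβ).1
    rw [renewalStep_eq_abs_of_normalizeSteps_eq hfix (hT hk)]
    simpa using this
  have hend : flipSteps d n β T n = β n + ∑ k ∈ T, (-2 : ℤ) • renewalStep β k := by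
    have hterm : ∀ k, (if k ∈ T then -renewalStep β k else renewalStep β k) - renewalStep β k =
        if k ∈ T then (-2 : ℤ) • renewalStep β k else 0 := fun k => by
      split_ifs
      · abel
      · exact sub_self _
    rw [flipSteps, resample_apply_of_le le_rfl, sum_congr rfl fun k _ => hterm k, sum_ite_mem,
      inter_eq_right.2 hT]
  rw [hend]
  simp only [Pi.add_apply, Finset.sum_apply, Pi.smul_apply, smul_eq_mul, sum_add_distrib]
  rw [sum_comm]
  simp only [← mul_sum]
  rw [sum_congr rfl hunit, sum_const, nsmul_one]
  ring

end Bridges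

theorem IsSAW.abs_apply_le {d n : ℕ} {γ : ℕ → Fin d → ℤ} (hγ : IsSAW d n γ) :
    ∀ i ≤ n, ∀ j, |γ i j| ≤ i := by
  intro i
  induction i with
  | zero => intro _ j; simp [hγ.1]
  | succ i ih =>
    intro hi j
    have hstep : |γ (i + 1) j - γ i j| ≤ 1 := hγ.2.1 i (by omega) ▸
      single_le_sum (f := fun j => |γ (i + 1) j - γ i j|) (fun _ _ => abs_nonneg _) (mem_univ j)
    have := ih (by omega) j
    have := abs_sub_abs_le_abs_sub (γ (i + 1) j) (γ i j)
    push_cast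
    linarith

section Counting

variable {d n M : ℕ} [NeZero d] {hgt : ℤ} {γ : ℕ → Fin d → ℤ}

theorem filter_normalizeSteps_eq (hfin : (BridgeSet d n M hgt).Finite)
    (hγ : γ ∈ BridgeSet d n M hgt) :
    {γ' ∈ hfin.toFinset | normalizeSteps d n γ' = normalizeSteps d n γ} =
      (renewalTimes d n γ).powerset.image (flipSteps d n (normalizeSteps d n γ)) := by
  ext γ'
  simp only [mem_filter, Set.Finite.mem_toFinset, mem_image, mem_powerset]
  constructor
  · rintro ⟨hγ', heq⟩
    obtain ⟨T, hT, hflip⟩ := exists_flipSteps_normalizeSteps_eq hγ'.1.1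
    refine ⟨T, ?_, heq ▸ hflip⟩
    rwa [← renewalTimes_normalizeSteps (γ := γ), ← heq, renewalTimes_normalizeSteps]
  · rintro ⟨T, -, rfl⟩
    exact ⟨flipSteps_mem_bridgeSet (normalizeSteps_mem_bridgeSet hγ),
      normalizeSteps_flipSteps normalizeSteps_idem⟩

theorem card_filter_normalizeSteps_eq (hfin : (BridgeSet d n M hgt).Finite)
    (hγ : γ ∈ BridgeSet d n M hgt) :
    #{γ' ∈ hfin.toFinset | normalizeSteps d n γ' = normalizeSteps d n γ} =
      2 ^ #(renewalTimes d n γ) := by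
  have hinj := flipSteps_injOn (normalizeSteps_mem_bridgeSet hγ).1.1
  rw [renewalTimes_normalizeSteps] at hinj
  rw [filter_normalizeSteps_eq hfin hγ, card_image_of_injOn hinj, card_powerset]

theorem card_filter_normalizeSteps_eq_and_apply_eq_le (hfin : (BridgeSet d n M hgt).Finite)
    (hγ : γ ∈ BridgeSet d n M hgt) (x : Fin d → ℤ) :
    #{γ' ∈ hfin.toFinset | normalizeSteps d n γ' = normalizeSteps d n γ ∧ γ' n = x} ≤
      (#(renewalTimes d n γ)).choose (#(renewalTimes d n γ) / 2) := by
  set R := renewalTimes d n γ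
  have hflips : {T ∈ R.powerset | flipSteps d n (normalizeSteps d n γ) T n = x} ⊆
      R.powersetCard ((∑ j, normalizeSteps d n γ n j - ∑ j, x j) / 2).toNat := fun T hT => by
    obtain ⟨hTR, hx⟩ := mem_filter.1 hT
    have hTR := mem_powerset.1 hTR
    have hsum := sum_flipSteps_apply (normalizeSteps_mem_bridgeSet hγ).1.1 normalizeSteps_idem
      (hTR.trans renewalTimes_normalizeSteps.symm.subset)
    rw [hx] at hsum
    exact mem_powersetCard.2 ⟨hTR, by omega⟩
  rw [← filter_filter, filter_normalizeSteps_eq hfin hγ, filter_image]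
  calc _ ≤ #{T ∈ R.powerset | flipSteps d n (normalizeSteps d n γ) T n = x} := card_image_le
    _ ≤ #(R.powersetCard ((∑ j, normalizeSteps d n γ n j - ∑ j, x j) / 2).toNat) :=
        card_le_card hflips
    _ ≤ _ := by rw [card_powersetCard]; exact Nat.choose_le_middle _ _

theorem bridgeSet_finite : (BridgeSet d n M hgt).Finite := by
  refine Set.Finite.of_finite_image (f := fun γ (i : Fin (n + 1)) => γ i)
    ((Set.Finite.pi fun _ => Set.Finite.pi fun _ => Set.finite_Icc (-(n : ℤ)) n).subset ?_) ?_
  · rintro _ ⟨γ, hγ, rfl⟩ i - j -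
    exact abs_le.1 ((hγ.1.1.abs_apply_le i (by omega) j).trans (by exact_mod_cast i.is_le))
  · intro γ hγ γ' hγ' h
    have hle : ∀ i ≤ n, γ i = γ' i := fun i hi => congrFun h ⟨i, by omega⟩
    funext m
    rcases le_or_gt m n with hm | hm
    · exact hle m hm
    · rw [hγ.2.2.2 m hm.le, hγ'.2.2.2 m hm.le, hle n le_rfl]

end Counting

theorem stmt_14_general (d : ℕ) [NeZero d] (ε : ℝ) (hε : 0 < ε) :
    ∃ M : ℕ, ∀ n : ℕ, 0 < n → ∀ hgt : ℤ, 0 < hgt → ∀ x : Fin d → ℤ,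
      (Nat.card {γ : ℕ → Fin d → ℤ // γ ∈ BridgeSet d n M hgt ∧ γ n = x} : ℝ)
        ≤ ε * (Nat.card ↥(BridgeSet d n M hgt) : ℝ) := by
  obtain ⟨M, hM⟩ := exists_forall_choose_middle_le hε
  refine ⟨M, fun n _ hgt _ x => ?_⟩
  have hfin : (BridgeSet d n M hgt).Finite := bridgeSet_finite
  have hnum : Nat.card {γ // γ ∈ BridgeSet d n M hgt ∧ γ n = x} =
      #{γ ∈ hfin.toFinset | γ n = x} := by
    rw [← Nat.card_eq_finsetCard]
    exact Nat.card_congr (Equiv.subtypeEquivRight fun γ => by simp)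
  rw [hnum, Nat.card_eq_card_finite_toFinset hfin]
  refine card_filter_le_mul_card_of_fibers (normalizeSteps d n) _ _ fun β hβ => ?_
  obtain ⟨γ, hγ, rfl⟩ := mem_image.1 hβ
  rw [Set.Finite.mem_toFinset] at hγ
  have hR : M ≤ #(renewalTimes d n γ) := by
    simpa only [zRenCount_eq_card_renewalTimes] using hγ.2.1
  calc (#{γ' ∈ hfin.toFinset | normalizeSteps d n γ' = normalizeSteps d n γ ∧ γ' n = x} : ℝ)
      ≤ (#(renewalTimes d n γ)).choose (#(renewalTimes d n γ) / 2) := by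
        exact_mod_cast card_filter_normalizeSteps_eq_and_apply_eq_le hfin hγ x
    _ ≤ ε * 2 ^ #(renewalTimes d n γ) := hM _ hR
    _ = ε * #{γ' ∈ hfin.toFinset | normalizeSteps d n γ' = normalizeSteps d n γ} := by
        rw [card_filter_normalizeSteps_eq hfin hγ]; push_cast; rfl

/-- Proposition prop:Mvariation: for every ε > 0 there is M such that, uniformly in
n, the height h > 0 and x ∈ ℤ^d, the proportion of bridges of length n with at least
M z-renewal times and endpoint height h that end exactly at x is at most ε. -/
theorem stmt_14 (d : ℕ) (hd : 2 ≤ d) [NeZero d] (ε : ℝ) (hε : 0 < ε) :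
    ∃ M : ℕ, ∀ n : ℕ, 0 < n → ∀ hgt : ℤ, 0 < hgt → ∀ x : Fin d → ℤ,
      (Nat.card {γ : ℕ → Fin d → ℤ // γ ∈ BridgeSet d n M hgt ∧ γ n = x} : ℝ)
        ≤ ε * (Nat.card ↥(BridgeSet d n M hgt) : ℝ) :=
  stmt_14_general d ε hε
end
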